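/- arXiv:1803.04516 — 4 statements merged into one kernel-verified Lean document; each statement's English description precedes it below -/
import Mathlib

section
/- Let n ≥ 2, b ∈ {1, −1}, c = 2 and d be real with λ = 2 − d satisfying λ ≠ 0, λ ≠ 1 and λ ≠ (n+1)/(n−1), and let Q be the corresponding n×n tridiagonal matrix. Then Q is invertible and for all 1 ≤ i ≤ j ≤ n, (Q^{-1})_{ij} = b^{i+j} · {1 + (1−λ)(i−1)} · {1 + (1−λ)(n−j)} / [ (1−λ) { (1−λ)(n−1) + 2 } ]. -/
/-- The sequence β₀ = 1, β₁ = d, βᵢ = c βᵢ₋₁ − βᵢ₋₂. -/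
noncomputable def beta (c d : ℝ) : ℕ → ℝ
  | 0 => 1
  | 1 => d
  | i + 2 => c * beta c d (i + 1) - beta c d i

/-- The n×n symmetric tridiagonal matrix with diagonal (d, c, …, c, d) and
off-diagonal entries −b. -/
noncomputable def triQ (n : ℕ) (b c d : ℝ) : Matrix (Fin n) (Fin n) ℝ :=
  Matrix.of fun i j =>
    if i = j then (if (i : ℕ) = 0 ∨ (i : ℕ) = n - 1 then d else c)
    else if (i : ℕ) + 1 = (j : ℕ) ∨ (j : ℕ) + 1 = (i : ℕ) then -b else 0

/-!
Conjugating by `diagonal (b ^ i)` turns `triQ n b c d` into `triQ n 1 c d`, because `b ^ 2 = 1`,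
so only `b = 1` needs work. For `c = 2` the interior rows say that a column of the inverse is
discretely harmonic off the diagonal, `f (j - 1) - 2 f j + f (j + 1) = 0`, i.e. piecewise
affine. The affine sequences `u j = 1 + (d - 1) j` and `v j = 1 + (d - 1) (n - 1 - j)` satisfy
the first and the last row respectively, so the columns of the inverse are
`u (min j k) * v (max j k) / W`, where
`W = u j (v j - v (j + 1)) + v j (u j - u (j - 1)) = (d - 1) ((d - 1) (n - 1) + 2)`
is the constant Wronskian of `u` and `v`.
-/

open Matrix

section Entries

variable {n : ℕ} (b c d : ℝ)

lemma triQ_apply_self (i : Fin n) :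
    triQ n b c d i i = if (i : ℕ) = 0 ∨ (i : ℕ) = n - 1 then d else c := by
  simp [triQ]

lemma triQ_apply_of_adjacent {i j : Fin n} (h : (i : ℕ) + 1 = j ∨ (j : ℕ) + 1 = i) :
    triQ n b c d i j = -b := by
  rw [triQ, of_apply, if_neg (by rintro rfl; omega), if_pos h]

lemma triQ_apply_of_far {i j : Fin n} (h : (i : ℕ) + 1 < j ∨ (j : ℕ) + 1 < i) :
    triQ n b c d i j = 0 := by
  rw [triQ, of_apply, if_neg (by rintro rfl; omega), if_neg (by omega)]

lemma sum_triQ_mul_eq_sum_of_subset (i : Fin n) {s : Finset (Fin n)}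
    (hs : ∀ j : Fin n, (i : ℕ) ≤ j + 1 → (j : ℕ) ≤ i + 1 → j ∈ s) (f : Fin n → ℝ) :
    ∑ j, triQ n b c d i j * f j = ∑ j ∈ s, triQ n b c d i j * f j := by
  refine (Finset.sum_subset (Finset.subset_univ s) fun j _ hj => ?_).symm
  rw [triQ_apply_of_far b c d (by by_contra! h; exact hj (hs j (by omega) (by omega))), zero_mul]

end Entries

section Rows

variable {n : ℕ} (b c d : ℝ) (f : ℕ → ℝ)

lemma sum_triQ_mul_of_val_eq_zero (hn : 2 ≤ n) {i : Fin n} (hi : (i : ℕ) = 0) :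
    ∑ j : Fin n, triQ n b c d i j * f j = d * f 0 - b * f 1 := by
  obtain ⟨i, hi'⟩ := i
  obtain rfl : i = 0 := hi
  rw [sum_triQ_mul_eq_sum_of_subset b c d _ (s := {⟨0, by omega⟩, ⟨1, by omega⟩})
      (fun j h₁ h₂ => by
        simp only [Finset.mem_insert, Finset.mem_singleton, Fin.ext_iff] at h₁ h₂ ⊢; omega),
    Finset.sum_pair (by simp [Fin.ext_iff]), triQ_apply_self, if_pos (Or.inl rfl),
    triQ_apply_of_adjacent b c d (Or.inl rfl)]
  ring

lemma sum_triQ_mul_of_val_eq_succ {m : ℕ} (hm : m + 2 < n) {i : Fin n} (hi : (i : ℕ) = m + 1) :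
    ∑ j : Fin n, triQ n b c d i j * f j = c * f (m + 1) - b * (f m + f (m + 2)) := by
  obtain ⟨i, hi'⟩ := i
  obtain rfl : i = m + 1 := hi
  rw [sum_triQ_mul_eq_sum_of_subset b c d _
      (s := {⟨m, by omega⟩, ⟨m + 1, by omega⟩, ⟨m + 2, by omega⟩})
      (fun j h₁ h₂ => by
        simp only [Finset.mem_insert, Finset.mem_singleton, Fin.ext_iff] at h₁ h₂ ⊢; omega),
    Finset.sum_insert (by simp [Fin.ext_iff]), Finset.sum_pair (by simp [Fin.ext_iff]),
    triQ_apply_self, if_neg (by simp; omega),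
    triQ_apply_of_adjacent b c d (Or.inr rfl), triQ_apply_of_adjacent b c d (Or.inl rfl)]
  ring

lemma sum_triQ_mul_of_val_eq_last {m : ℕ} (hm : m + 2 = n) {i : Fin n} (hi : (i : ℕ) = m + 1) :
    ∑ j : Fin n, triQ n b c d i j * f j = d * f (m + 1) - b * f m := by
  obtain ⟨i, hi'⟩ := i
  obtain rfl : i = m + 1 := hi
  rw [sum_triQ_mul_eq_sum_of_subset b c d _ (s := {⟨m, by omega⟩, ⟨m + 1, by omega⟩})
      (fun j h₁ h₂ => by
        simp only [Finset.mem_insert, Finset.mem_singleton, Fin.ext_iff] at h₁ h₂ ⊢; omega),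
    Finset.sum_pair (by simp [Fin.ext_iff]), triQ_apply_self, if_pos (Or.inr (by simp; omega)),
    triQ_apply_of_adjacent b c d (Or.inr rfl)]
  ring

end Rows

section Signs

variable {n : ℕ} {b : ℝ}

lemma diagonal_pow_mul_self (hb : b ^ 2 = 1) :
    diagonal (fun i : Fin n => b ^ (i : ℕ)) * diagonal (fun i : Fin n => b ^ (i : ℕ)) = 1 := by
  rw [diagonal_mul_diagonal, ← diagonal_one]
  congr 1
  funext i
  rw [← mul_pow, ← sq, hb, one_pow]

lemma triQ_eq_diagonal_mul_triQ_one_mul_diagonal (hb : b ^ 2 = 1) (c d : ℝ) :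
    triQ n b c d = diagonal (fun i : Fin n => b ^ (i : ℕ)) * triQ n 1 c d *
      diagonal (fun i : Fin n => b ^ (i : ℕ)) := by
  ext i j
  rw [mul_diagonal, diagonal_mul]
  have hpow (k : ℕ) : b ^ k * b ^ k = 1 := by rw [← mul_pow, ← sq, hb, one_pow]
  by_cases hij : i = j
  · subst hij
    rw [triQ_apply_self, triQ_apply_self, mul_right_comm, hpow, one_mul]
  by_cases hadj : (i : ℕ) + 1 = j ∨ (j : ℕ) + 1 = i
  · rw [triQ_apply_of_adjacent _ _ _ hadj, triQ_apply_of_adjacent _ _ _ hadj]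
    rcases hadj with h | h <;> rw [← h, pow_succ]
    · linear_combination b * hpow i
    · linear_combination b * hpow j
  · rw [triQ_apply_of_far _ _ _ (by omega), triQ_apply_of_far _ _ _ (by omega), mul_zero,
      zero_mul]

end Signs

section Green

variable (n : ℕ) (d : ℝ)

def greenNum (j k : ℕ) : ℝ :=
  (1 + (d - 1) * (min j k : ℕ)) * (1 + (d - 1) * ((n : ℝ) - 1 - (max j k : ℕ)))

def greenWronskian : ℝ :=
  (d - 1) * ((d - 1) * ((n : ℝ) - 1) + 2)

noncomputable def greenMatrix : Matrix (Fin n) (Fin n) ℝ :=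
  of fun j k => greenNum n d j k / greenWronskian n d

variable {n d}

lemma greenNum_of_le {j k : ℕ} (h : j ≤ k) :
    greenNum n d j k = (1 + (d - 1) * j) * (1 + (d - 1) * ((n : ℝ) - 1 - k)) := by
  rw [greenNum, min_eq_left h, max_eq_right h]

lemma greenNum_of_ge {j k : ℕ} (h : k ≤ j) :
    greenNum n d j k = (1 + (d - 1) * k) * (1 + (d - 1) * ((n : ℝ) - 1 - j)) := by
  rw [greenNum, min_eq_right h, max_eq_left h]

lemma greenNum_first (k : ℕ) :
    d * greenNum n d 0 k - greenNum n d 1 k = if k = 0 then greenWronskian n d else 0 := by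
  split_ifs with hk
  · subst hk
    rw [greenNum_of_le le_rfl, greenNum_of_ge zero_le_one, greenWronskian]
    ring
  · rw [greenNum_of_le (Nat.zero_le k), greenNum_of_le (Nat.one_le_iff_ne_zero.2 hk)]
    push_cast
    ring

lemma greenNum_succ (m k : ℕ) :
    2 * greenNum n d (m + 1) k - (greenNum n d m k + greenNum n d (m + 2) k) =
      if k = m + 1 then greenWronskian n d else 0 := by
  rcases lt_trichotomy k (m + 1) with hk | rfl | hk
  · rw [if_neg hk.ne, greenNum_of_ge (show k ≤ m + 1 by omega),
      greenNum_of_ge (show k ≤ m by omega), greenNum_of_ge (show k ≤ m + 2 by omega)]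
    push_cast
    ring
  · rw [if_pos rfl, greenNum_of_le le_rfl, greenNum_of_le (show m ≤ m + 1 by omega),
      greenNum_of_ge (show m + 1 ≤ m + 2 by omega), greenWronskian]
    push_cast
    ring
  · rw [if_neg hk.ne', greenNum_of_le hk.le, greenNum_of_le (show m ≤ k by omega),
      greenNum_of_le (show m + 2 ≤ k by omega)]
    push_cast
    ring

lemma greenNum_last (m k : ℕ) (hk : k ≤ m + 1) :
    d * greenNum (m + 2) d (m + 1) k - greenNum (m + 2) d m k =
      if k = m + 1 then greenWronskian (m + 2) d else 0 := by
  rcases hk.lt_or_eq with hk | rfl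
  · rw [if_neg hk.ne, greenNum_of_ge hk.le, greenNum_of_ge (show k ≤ m by omega)]
    push_cast
    ring
  · rw [if_pos rfl, greenNum_of_le le_rfl, greenNum_of_le (show m ≤ m + 1 by omega),
      greenWronskian]
    push_cast
    ring

lemma sum_triQ_one_two_mul_greenNum (hn : 2 ≤ n) (d : ℝ) (i : Fin n) {k : ℕ} (hk : k < n) :
    ∑ j : Fin n, triQ n 1 2 d i j * greenNum n d j k =
      if (i : ℕ) = k then greenWronskian n d else 0 := by
  obtain ⟨_ | m, hi⟩ := i
  · rw [sum_triQ_mul_of_val_eq_zero 1 2 d (greenNum n d · k) hn rfl, one_mul, greenNum_first]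
    simp only [eq_comm]
  rcases (show m + 2 < n ∨ m + 2 = n by omega) with hm | rfl
  · rw [sum_triQ_mul_of_val_eq_succ 1 2 d (greenNum n d · k) hm rfl, one_mul, greenNum_succ]
    simp only [eq_comm]
  · rw [sum_triQ_mul_of_val_eq_last 1 2 d (greenNum (m + 2) d · k) rfl rfl, one_mul,
      greenNum_last m k (by omega)]
    simp only [eq_comm]

lemma triQ_one_two_mul_greenMatrix (hn : 2 ≤ n) (hW : greenWronskian n d ≠ 0) :
    triQ n 1 2 d * greenMatrix n d = 1 := by
  ext i k
  simp only [mul_apply, greenMatrix, of_apply, mul_div_assoc', ← Finset.sum_div,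
    sum_triQ_one_two_mul_greenNum hn d i k.isLt, one_apply, Fin.ext_iff]
  split_ifs <;> simp [hW]

end Green

theorem triQ_inv_c_eq_two_general (n : ℕ) (hn : 2 ≤ n) (b d : ℝ) (hb : b = 1 ∨ b = -1)
    (h1 : (2 : ℝ) - d ≠ 1)
    (h2 : (2 : ℝ) - d ≠ ((n : ℝ) + 1) / ((n : ℝ) - 1)) :
    IsUnit (triQ n b 2 d) ∧
    ∀ i j : Fin n, i ≤ j →
      (triQ n b 2 d)⁻¹ i j =
        b ^ (((i : ℕ) + 1) + ((j : ℕ) + 1)) *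
          ((1 + (1 - (2 - d)) * (i : ℕ)) *
            (1 + (1 - (2 - d)) * ((n : ℝ) - ((j : ℕ) + 1)))) /
          ((1 - (2 - d)) * ((1 - (2 - d)) * ((n : ℝ) - 1) + 2)) := by
  have hb2 : b ^ 2 = 1 := by rcases hb with rfl | rfl <;> norm_num
  have hn1 : (n : ℝ) - 1 ≠ 0 := by
    have : (2 : ℝ) ≤ n := by exact_mod_cast hn
    linarith
  have hW : greenWronskian n d ≠ 0 := by
    refine mul_ne_zero (fun h => h1 (by linarith)) fun h => h2 ?_
    rw [eq_div_iff hn1]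
    linear_combination -h
  set D := diagonal fun i : Fin n => b ^ (i : ℕ)
  have hinv : triQ n b 2 d * (D * greenMatrix n d * D) = 1 := by
    rw [triQ_eq_diagonal_mul_triQ_one_mul_diagonal hb2,
      show D * triQ n 1 2 d * D * (D * greenMatrix n d * D) =
        D * (triQ n 1 2 d * (D * D) * greenMatrix n d) * D by simp only [Matrix.mul_assoc],
      diagonal_pow_mul_self hb2, Matrix.mul_one, triQ_one_two_mul_greenMatrix hn hW,
      Matrix.mul_one, diagonal_pow_mul_self hb2]
  refine ⟨(isUnit_iff_isUnit_det _).2 (isUnit_det_of_right_inverse hinv), fun i j hij => ?_⟩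
  rw [inv_eq_right_inv hinv, mul_diagonal, diagonal_mul, greenMatrix, of_apply, greenWronskian,
    greenNum_of_le (Fin.le_iff_val_le_val.1 hij),
    show b ^ ((i : ℕ) + 1 + ((j : ℕ) + 1)) = b ^ (i : ℕ) * b ^ (j : ℕ) * b ^ 2 by ring, hb2]
  ring

/-- Corollary, c = 2: with λ = 2 − d, λ ∉ {0, 1, (n+1)/(n−1)},
Q is invertible and for 1 ≤ i ≤ j ≤ n,
(Q⁻¹)ᵢⱼ = b^{i+j} {1+(1−λ)(i−1)}{1+(1−λ)(n−j)} / [(1−λ){(1−λ)(n−1)+2}]. -/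
theorem triQ_inv_c_eq_two (n : ℕ) (hn : 2 ≤ n) (b d : ℝ) (hb : b = 1 ∨ b = -1)
    (h0 : (2 : ℝ) - d ≠ 0) (h1 : (2 : ℝ) - d ≠ 1)
    (h2 : (2 : ℝ) - d ≠ ((n : ℝ) + 1) / ((n : ℝ) - 1)) :
    IsUnit (triQ n b 2 d) ∧
    ∀ i j : Fin n, i ≤ j →
      (triQ n b 2 d)⁻¹ i j =
        b ^ (((i : ℕ) + 1) + ((j : ℕ) + 1)) *
          ((1 + (1 - (2 - d)) * (i : ℕ)) *
            (1 + (1 - (2 - d)) * ((n : ℝ) - ((j : ℕ) + 1)))) /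
          ((1 - (2 - d)) * ((1 - (2 - d)) * ((n : ℝ) - 1) + 2)) :=
  triQ_inv_c_eq_two_general n hn b d hb h1 h2
end

section
/- Let n ≥ 2, b ∈ {1, −1}, c ≥ 0 with c ≠ 2, and d be real with λ = c − d ≠ 0, and suppose Q is invertible. Then for all 1 ≤ i ≤ j ≤ n, the complex number coercion of (Q^{-1})_{ij} equals (b^{i−1} κ_{i−1} / κ_0) · (b^{j−1} κ_{n−j} / κ), where κ = φ_+² r_+^{n−1} − φ_-² r_-^{n−1} (which in particular is nonzero). -/
lemma beta_add_two (c d : ℝ) (k : ℕ) : beta c d (k + 2) = c * beta c d (k + 1) - beta c d k := rfl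

lemma beta_succ_add_beta_pred (c d : ℝ) (k : ℕ) :
    beta c d (k + 1) + (if 0 < k then beta c d (k - 1) else 0) =
      (if k = 0 then d else c) * beta c d k := by
  cases k with
  | zero => simp [beta]
  | succ k => simp [beta_add_two]

lemma beta_mul_beta_sub (c d : ℝ) (k l : ℕ) :
    beta c d (k + 1) * beta c d (l + 1) - beta c d k * beta c d l =
      d * beta c d (k + l + 1) - beta c d (k + l) := by
  induction k generalizing l with
  | zero => simp [beta]
  | succ k ih =>
    rw [beta_add_two, show k + 1 + l = k + (l + 1) by omega, ← ih, beta_add_two]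
    ring

lemma beta_mul_beta_diag (c d : ℝ) {k t : ℕ} (h : k + t ≠ 0) :
    (if k = 0 ∨ t = 0 then d else c) * (beta c d k * beta c d t)
      - ((if 0 < t then beta c d k * beta c d (t - 1) else 0)
        + (if 0 < k then beta c d (k - 1) * beta c d t else 0)) =
      d * beta c d (k + t) - beta c d (k + t - 1) := by
  rcases k with _ | k <;> rcases t with _ | t
  · omega
  · simp [beta]
  · simp [beta]
  · have := beta_mul_beta_sub c d (k + 1) t
    simp only [beta_add_two, Nat.add_one_sub_one, show k + 1 + (t + 1) = k + 1 + t + 1 by omega,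
      show k + 1 + t + 1 - 1 = k + 1 + t by omega, Nat.add_one_ne_zero, or_self, if_false,
      Nat.zero_lt_succ, if_true] at this ⊢
    linear_combination this

-- `f` is indexed by `ℕ` so that the neighbours `k ± 1` need no `Fin` arithmetic.
lemma triQ_mul_of_apply (n : ℕ) (b c d : ℝ) (f : ℕ → ℕ → ℝ) (k j : Fin n) :
    (triQ n b c d * Matrix.of fun i j : Fin n => f i j) k j =
      (if (k : ℕ) = 0 ∨ (k : ℕ) = n - 1 then d else c) * f k j
        - b * ((if (k : ℕ) + 1 < n then f (k + 1) j else 0)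
          + (if 0 < (k : ℕ) then f (k - 1) j else 0)) := by
  set q : ℕ → ℝ := fun l => if (k : ℕ) = l then (if (k : ℕ) = 0 ∨ (k : ℕ) = n - 1 then d else c)
    else if (k : ℕ) + 1 = l ∨ l + 1 = (k : ℕ) then -b else 0
  have hq : ∀ l : ℕ, q l * f l j =
      (if l = k then (if (k : ℕ) = 0 ∨ (k : ℕ) = n - 1 then d else c) * f l j else 0)
        - b * ((if l = k + 1 then f l j else 0)
          + (if 0 < (k : ℕ) then (if l = k - 1 then f l j else 0) else 0)) := by
    intro l; simp only [q]; split_ifs <;> first | omega | ring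
  calc (triQ n b c d * Matrix.of fun i j : Fin n => f i j) k j
      = ∑ l : Fin n, q l * f l j := by
        simp only [Matrix.mul_apply, triQ, Matrix.of_apply, Fin.ext_iff, q]
    _ = ∑ l ∈ Finset.range n, q l * f l j := Fin.sum_univ_eq_sum_range (fun l => q l * f l j) n
    _ = _ := by
        simp only [hq, Finset.sum_sub_distrib, ← Finset.mul_sum, Finset.sum_add_distrib,
          Finset.sum_ite_irrel, Finset.sum_ite_eq', Finset.mem_range, Finset.sum_const_zero, k.isLt,
          show (k : ℕ) - 1 < n by omega, if_true]

noncomputable def triQGreen (n : ℕ) (c d : ℝ) (i j : ℕ) : ℝ :=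
  beta c d (min i j) * beta c d (n - 1 - max i j)

noncomputable def triQGreenMatrix (n : ℕ) (b c d : ℝ) : Matrix (Fin n) (Fin n) ℝ :=
  Matrix.of fun i j => b ^ ((i : ℕ) + j) * triQGreen n c d i j

lemma triQGreen_row {n : ℕ} (hn : 2 ≤ n) (c d : ℝ) {k j : ℕ} (hk : k < n) (hj : j < n) :
    (if k = 0 ∨ k = n - 1 then d else c) * triQGreen n c d k j
      - ((if k + 1 < n then triQGreen n c d (k + 1) j else 0)
        + (if 0 < k then triQGreen n c d (k - 1) j else 0)) =
      if k = j then d * beta c d (n - 1) - beta c d (n - 2) else 0 := by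
  simp only [triQGreen]
  rcases lt_trichotomy k j with hkj | rfl | hkj
  · obtain ⟨s, rfl⟩ : ∃ s, n = j + s + 1 := ⟨n - 1 - j, by omega⟩
    have hrow := beta_succ_add_beta_pred c d k
    simp only [min_eq_left hkj.le, max_eq_right hkj.le, min_eq_left (show k + 1 ≤ j by omega),
      max_eq_right (show k + 1 ≤ j by omega), min_eq_left (show k - 1 ≤ j by omega),
      max_eq_right (show k - 1 ≤ j by omega), show k + 1 < j + s + 1 by omega,
      show k ≠ j + s + 1 - 1 by omega, show j + s + 1 - 1 - j = s by omega, hkj.ne, or_false,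
      if_true, if_false]
    split_ifs at hrow ⊢ <;> linear_combination (-beta c d s) * hrow
  · obtain ⟨t, rfl⟩ : ∃ t, n = k + t + 1 := ⟨n - 1 - k, by omega⟩
    rw [min_self, max_self, min_eq_right k.le_succ, max_eq_left k.le_succ,
      min_eq_left (k.sub_le 1), max_eq_right (k.sub_le 1), show k + t + 1 - 1 - k = t by omega,
      show k + t + 1 - 1 - (k + 1) = t - 1 by omega, show k + t + 1 - 1 = k + t by omega,
      show k + t + 1 - 2 = k + t - 1 by omega]
    simp only [show k + 1 < k + t + 1 ↔ 0 < t by omega, show k = k + t ↔ t = 0 by omega, if_true]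
    exact beta_mul_beta_diag c d (by omega)
  · obtain ⟨t, rfl⟩ : ∃ t, n = k + t + 1 := ⟨n - 1 - k, by omega⟩
    have hrow := beta_succ_add_beta_pred c d t
    simp only [min_eq_right hkj.le, max_eq_left hkj.le, min_eq_right (show j ≤ k + 1 by omega),
      max_eq_left (show j ≤ k + 1 by omega), min_eq_right (show j ≤ k - 1 by omega),
      max_eq_left (show j ≤ k - 1 by omega), show 0 < k by omega, show k ≠ 0 by omega,
      show k + t + 1 - 1 - k = t by omega, show k + t + 1 - 1 - (k + 1) = t - 1 by omega,
      show k + t + 1 - 1 - (k - 1) = t + 1 by omega, hkj.ne', false_or, if_true, if_false]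
    split_ifs at hrow ⊢ <;> first | omega | linear_combination (-beta c d j) * hrow

lemma triQ_mul_triQGreenMatrix {n : ℕ} (hn : 2 ≤ n) {b : ℝ} (hb : b ^ 2 = 1) (c d : ℝ) :
    triQ n b c d * triQGreenMatrix n b c d =
      (d * beta c d (n - 1) - beta c d (n - 2)) • 1 := by
  ext k j
  rw [triQGreenMatrix]
  have hmul := triQ_mul_of_apply n b c d (fun i j => b ^ (i + j) * triQGreen n c d i j) k j
  have hrow := triQGreen_row hn c d k.isLt j.isLt
  have hup : b * (if (k : ℕ) + 1 < n then b ^ ((k : ℕ) + 1 + j) * triQGreen n c d (k + 1) j else 0)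
      = b ^ ((k : ℕ) + j) * (if (k : ℕ) + 1 < n then triQGreen n c d (k + 1) j else 0) := by
    split_ifs
    · rw [← mul_assoc, show (k : ℕ) + 1 + j = (k + j) + 1 by ring, pow_succ]
      linear_combination b ^ ((k : ℕ) + j) * triQGreen n c d (k + 1) j * hb
    · simp
  have hdown : b * (if 0 < (k : ℕ) then b ^ ((k : ℕ) - 1 + j) * triQGreen n c d (k - 1) j else 0)
      = b ^ ((k : ℕ) + j) * (if 0 < (k : ℕ) then triQGreen n c d (k - 1) j else 0) := by
    split_ifs
    · rw [← mul_assoc, show (k : ℕ) + j = ((k : ℕ) - 1 + j) + 1 by omega, pow_succ]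
      ring
    · simp
  rw [hmul, mul_add, hup, hdown, Matrix.smul_apply, Matrix.one_apply, smul_eq_mul]
  calc _ = b ^ ((k : ℕ) + j) *
        (if (k : ℕ) = j then d * beta c d (n - 1) - beta c d (n - 2) else 0) := by
        rw [← hrow]; ring
    _ = _ := by
        simp only [Fin.val_inj]
        split_ifs with hkj
        · rw [hkj, ← two_mul, pow_mul, hb, one_pow, one_mul, mul_one]
        · rw [mul_zero, mul_zero]

lemma Matrix.inv_eq_inv_smul_of_mul_eq_smul_one {ι K : Type*} [Fintype ι] [DecidableEq ι] [Field K]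
    {A M : Matrix ι ι K} {D : K} (hA : IsUnit A) (hM : M ≠ 0) (h : A * M = D • 1) :
    D ≠ 0 ∧ A⁻¹ = D⁻¹ • M := by
  have hD : D ≠ 0 := by
    rintro rfl
    rw [zero_smul, hA.mul_right_eq_zero] at h
    exact hM h
  refine ⟨hD, Matrix.inv_eq_right_inv ?_⟩
  rw [Matrix.mul_smul, h, smul_smul, inv_mul_cancel₀ hD, one_smul]

lemma triQ_inv_eq_smul_triQGreenMatrix {n : ℕ} (hn : 2 ≤ n) {b : ℝ} (hb : b ^ 2 = 1) {c d : ℝ}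
    (hQ : IsUnit (triQ n b c d)) :
    d * beta c d (n - 1) - beta c d (n - 2) ≠ 0 ∧
      (triQ n b c d)⁻¹ = (d * beta c d (n - 1) - beta c d (n - 2))⁻¹ • triQGreenMatrix n b c d := by
  refine Matrix.inv_eq_inv_smul_of_mul_eq_smul_one hQ (fun h => ?_)
    (triQ_mul_triQGreenMatrix hn hb c d)
  have hcorner := congrFun (congrFun h ⟨0, by omega⟩) ⟨n - 1, by omega⟩
  simp only [triQGreenMatrix, triQGreen, Matrix.of_apply, Matrix.zero_apply, zero_add, zero_le,
    inf_of_le_left, sup_of_le_right, tsub_self, beta, mul_one] at hcorner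
  rw [eq_zero_of_pow_eq_zero hcorner] at hb
  norm_num at hb

section Roots

variable {c d : ℝ} {rp rm : ℂ}

lemma kappa_eq_sub_mul_beta (hsum : rp + rm = c) (hmul : rp * rm = 1) (i : ℕ) :
    (rp - (c - d)) * rp ^ i - (rm - (c - d)) * rm ^ i = (rp - rm) * beta c d i := by
  induction i using Nat.twoStepInduction with
  | zero => simp [beta]
  | one => simp only [beta]; linear_combination (rp - rm) * hsum
  | more i ih₀ ih₁ =>
    push_cast [beta_add_two]
    linear_combination (c : ℂ) * ih₁ - ih₀
      + ((rp - (c - d)) * rp ^ (i + 1) - (rm - (c - d)) * rm ^ (i + 1)) * hsum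
      - ((rp - (c - d)) * rp ^ i - (rm - (c - d)) * rm ^ i) * hmul

lemma kappa_sq_eq_sub_mul_beta (hsum : rp + rm = c) (hmul : rp * rm = 1) (i : ℕ) :
    (rp - (c - d)) ^ 2 * rp ^ (i + 1) - (rm - (c - d)) ^ 2 * rm ^ (i + 1) =
      (rp - rm) * (d * beta c d (i + 1) - beta c d i : ℝ) := by
  have h₂ := kappa_eq_sub_mul_beta (d := d) hsum hmul (i + 2)
  have h₁ := kappa_eq_sub_mul_beta (d := d) hsum hmul (i + 1)
  push_cast [beta_add_two] at h₂ ⊢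
  linear_combination h₂ - (c - d : ℂ) * h₁

end Roots

theorem triQ_inv_c_ne_two_general (n : ℕ) (hn : 2 ≤ n) (b c d : ℝ) (hb : b = 1 ∨ b = -1)
    (hc0 : 0 ≤ c) (hc : c ≠ 2)
    (hQ : IsUnit (triQ n b c d)) :
    let lam : ℂ := (c : ℂ) - (d : ℂ)
    let rp : ℂ := ((c : ℂ) + ((c : ℂ) ^ 2 - 4) ^ ((1 : ℂ) / 2)) / 2
    let rm : ℂ := ((c : ℂ) - ((c : ℂ) ^ 2 - 4) ^ ((1 : ℂ) / 2)) / 2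
    let kappa : ℕ → ℂ := fun i => (rp - lam) * rp ^ i - (rm - lam) * rm ^ i
    let kap : ℂ := (rp - lam) ^ 2 * rp ^ (n - 1) - (rm - lam) ^ 2 * rm ^ (n - 1)
    kap ≠ 0 ∧
    ∀ i j : Fin n, i ≤ j →
      ((triQ n b c d)⁻¹ i j : ℂ) =
        ((b : ℂ) ^ (i : ℕ) * kappa (i : ℕ) / kappa 0) *
          ((b : ℂ) ^ (j : ℕ) * kappa (n - 1 - (j : ℕ)) / kap) := by
  set s : ℂ := ((c : ℂ) ^ 2 - 4) ^ ((1 : ℂ) / 2) with hs_def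
  intro lam rp rm kappa kap
  have hsq : s ^ 2 = (c - 2) * (c + 2) := by
    rw [hs_def, one_div, Complex.cpow_ofNat_inv_pow]; ring
  have hs : s ≠ 0 := by
    rw [← pow_ne_zero_iff two_ne_zero, hsq]
    exact mul_ne_zero (by exact_mod_cast sub_ne_zero.2 hc)
      (by exact_mod_cast (ne_of_gt (by linarith) : c + 2 ≠ 0))
  have hsum : rp + rm = c := by simp only [rp, rm]; ring
  have hmul : rp * rm = 1 := by simp only [rp, rm]; linear_combination (-1 / 4 : ℂ) * hsq
  have hsub : rp - rm = s := by simp only [rp, rm]; ring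
  obtain ⟨hD, hinv⟩ := triQ_inv_eq_smul_triQGreenMatrix hn
    (by rcases hb with rfl | rfl <;> norm_num) hQ
  have hkappa : ∀ i, kappa i = s * beta c d i := fun i => by
    rw [← hsub]; exact kappa_eq_sub_mul_beta hsum hmul i
  have hkap : kap = s * (d * beta c d (n - 1) - beta c d (n - 2) : ℝ) := by
    have := kappa_sq_eq_sub_mul_beta (d := d) hsum hmul (n - 2)
    rwa [show n - 2 + 1 = n - 1 by omega, hsub] at this
  refine ⟨hkap ▸ mul_ne_zero hs (by exact_mod_cast hD), fun i j hij => ?_⟩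
  have hij' : (i : ℕ) ≤ j := hij
  rw [hkappa, hkappa, hkappa, hkap, hinv]
  simp only [triQGreenMatrix, triQGreen, Matrix.smul_apply, Matrix.of_apply, min_eq_left hij',
    max_eq_right hij', smul_eq_mul, beta]
  push_cast
  field_simp
  ring

/-- Corollary, c ≠ 2: if Q is invertible then, in ℂ,
(Q⁻¹)ᵢⱼ = (b^{i−1} κ_{i−1}/κ₀)(b^{j−1} κ_{n−j}/κ) for 1 ≤ i ≤ j ≤ n, where
κ = φ₊² r₊^{n−1} − φ₋² r₋^{n−1} ≠ 0. -/
theorem triQ_inv_c_ne_two (n : ℕ) (hn : 2 ≤ n) (b c d : ℝ) (hb : b = 1 ∨ b = -1)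
    (hc0 : 0 ≤ c) (hc : c ≠ 2) (hlam : c - d ≠ 0)
    (hQ : IsUnit (triQ n b c d)) :
    let lam : ℂ := (c : ℂ) - (d : ℂ)
    let rp : ℂ := ((c : ℂ) + ((c : ℂ) ^ 2 - 4) ^ ((1 : ℂ) / 2)) / 2
    let rm : ℂ := ((c : ℂ) - ((c : ℂ) ^ 2 - 4) ^ ((1 : ℂ) / 2)) / 2
    let kappa : ℕ → ℂ := fun i => (rp - lam) * rp ^ i - (rm - lam) * rm ^ i
    let kap : ℂ := (rp - lam) ^ 2 * rp ^ (n - 1) - (rm - lam) ^ 2 * rm ^ (n - 1)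
    kap ≠ 0 ∧
    ∀ i j : Fin n, i ≤ j →
      ((triQ n b c d)⁻¹ i j : ℂ) =
        ((b : ℂ) ^ (i : ℕ) * kappa (i : ℕ) / kappa 0) *
          ((b : ℂ) ^ (j : ℕ) * kappa (n - 1 - (j : ℕ)) / kap) :=
  triQ_inv_c_ne_two_general n hn b c d hb hc0 hc hQ
end

section
/- Let n ≥ 2, b ∈ {1, −1}, c ≥ 0 and d be real with λ = c − d ≠ 0, suppose either c ≠ 2, or c = 2 and b = −1, and suppose the corresponding n×n tridiagonal matrix Q is invertible. Then the sum s_i of the i-th row of Q^{-1} satisfies s_i = [ 1 − (b − λ)(v_i + v_{n−i+1}) ] / (c − 2b) for every i = 1, …, n. -/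
/-!
Put `u k = b ^ k * β (n - 1 - k)` and `D = d β (n - 1) - β (n - 2)`. The recurrence for `β` and
`b ^ 2 = 1` give `Q u = D e₀`; as `u (n - 1) = ± 1`, invertibility of `Q` forces `D ≠ 0`. Since `Q`
is persymmetric, the reversed vector `ū` satisfies `Q ū = D eₙ₋₁`, while
`Q 1 = (c - 2b) 1 + (b - λ) (e₀ + eₙ₋₁)`. Hence `Q` maps `(1 - (b - λ) (u + ū) / D) / (c - 2b)` to `1`,
so this vector is `Q⁻¹ 1`, the vector of row sums, and `u (i - 1) / D = vᵢ`.
-/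

open Matrix

lemma Fin.forall_of_zero_succ_last {n : ℕ} (hn : 2 ≤ n) {P : Fin n → Prop} (zero : P ⟨0, by omega⟩)
    (succ : ∀ k (hk : k + 2 < n), P ⟨k + 1, by omega⟩) (last : P ⟨n - 1, by omega⟩) (i : Fin n) :
    P i := by
  obtain ⟨_ | k, hk⟩ := i
  · exact zero
  by_cases hmid : k + 2 < n
  · exact succ k hmid
  · rwa [show (⟨k + 1, hk⟩ : Fin n) = ⟨n - 1, by omega⟩ from Fin.mk.inj_iff.mpr (by omega)]

variable {n : ℕ} {b c d : ℝ}

lemma triQ_mulVec_apply (x : ℕ → ℝ) (i : Fin n) :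
    (triQ n b c d *ᵥ fun j => x j) i =
      (if (i : ℕ) = 0 ∨ (i : ℕ) = n - 1 then d else c) * x i
        - (if (i : ℕ) + 1 < n then b * x (i + 1) else 0)
        - (if 0 < (i : ℕ) then b * x (i - 1) else 0) := by
  have hterm : ∀ j : Fin n, triQ n b c d i j * x j =
      (if (i : ℕ) = j then (if (i : ℕ) = 0 ∨ (i : ℕ) = n - 1 then d else c) * x j else 0)
        - (if (i : ℕ) + 1 = j then b * x j else 0)
        - (if 0 < (i : ℕ) ∧ (i : ℕ) - 1 = j then b * x j else 0) := by
    intro j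
    simp only [triQ, Matrix.of_apply, Fin.ext_iff]
    split_ifs <;> first | omega | ring
  simp only [mulVec, dotProduct, hterm, Finset.sum_sub_distrib]
  rw [Fin.sum_univ_eq_sum_range (fun j => if (i : ℕ) = j then _ * x j else 0),
    Fin.sum_univ_eq_sum_range (fun j => if (i : ℕ) + 1 = j then b * x j else 0),
    Fin.sum_univ_eq_sum_range (fun j => if 0 < (i : ℕ) ∧ (i : ℕ) - 1 = j then b * x j else 0)]
  have hi := i.isLt
  simp only [ite_and, Finset.sum_ite_irrel, Finset.sum_ite_eq, Finset.mem_range,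
    Finset.sum_const_zero, hi, if_true]
  congr 2
  split_ifs <;> first | rfl | omega

lemma triQ_submatrix_rev : (triQ n b c d).submatrix Fin.rev Fin.rev = triQ n b c d := by
  ext i j
  have := i.isLt
  have := j.isLt
  simp only [triQ, Matrix.submatrix_apply, Matrix.of_apply, Fin.val_rev, Fin.ext_iff]
  split_ifs <;> first | rfl | omega

lemma triQ_mulVec_apply_zero (hn : 2 ≤ n) (x : ℕ → ℝ) :
    (triQ n b c d *ᵥ fun j => x j) ⟨0, by omega⟩ = d * x 0 - b * x 1 := by
  rw [triQ_mulVec_apply]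
  simp [show 1 < n by omega]

lemma triQ_mulVec_apply_succ {k : ℕ} (hk : k + 2 < n) (x : ℕ → ℝ) :
    (triQ n b c d *ᵥ fun j => x j) ⟨k + 1, by omega⟩ = c * x (k + 1) - b * x (k + 2) - b * x k := by
  rw [triQ_mulVec_apply]
  simp [show ¬ k + 1 = n - 1 by omega, hk]

lemma triQ_mulVec_apply_last (hn : 2 ≤ n) (x : ℕ → ℝ) :
    (triQ n b c d *ᵥ fun j => x j) ⟨n - 1, by omega⟩ = d * x (n - 1) - b * x (n - 2) := by
  rw [triQ_mulVec_apply]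
  simp [show 0 < n - 1 by omega, show ¬ n - 1 + 1 < n by omega, show n - 1 - 1 = n - 2 by omega]

lemma triQ_mulVec_comp_rev (x : Fin n → ℝ) :
    triQ n b c d *ᵥ (x ∘ Fin.rev) = (triQ n b c d *ᵥ x) ∘ Fin.rev := by
  have h : (triQ n b c d).submatrix Fin.rev Fin.rev *ᵥ (x ∘ Fin.rev) =
      (triQ n b c d *ᵥ (x ∘ Fin.rev ∘ Fin.rev)) ∘ Fin.rev :=
    submatrix_mulVec_equiv _ _ _ Fin.revPerm
  rwa [triQ_submatrix_rev, Fin.rev_involutive.comp_self, Function.comp_id] at h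

noncomputable def betaVec (n : ℕ) (b c d : ℝ) (k : ℕ) : ℝ := b ^ k * beta c d (n - (k + 1))

lemma triQ_mulVec_betaVec (hn : 2 ≤ n) (hb : b ^ 2 = 1) :
    triQ n b c d *ᵥ (fun j => betaVec n b c d j) =
      (d * beta c d (n - 1) - beta c d (n - 2)) • Pi.single ⟨0, by omega⟩ 1 := by
  funext i
  induction i using Fin.forall_of_zero_succ_last hn with
  | zero =>
    rw [triQ_mulVec_apply_zero hn, Pi.smul_apply, Pi.single_eq_same, smul_eq_mul]
    simp only [betaVec, zero_add, one_add_one_eq_two]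
    linear_combination (-beta c d (n - 2)) * hb
  | succ k hk =>
    rw [triQ_mulVec_apply_succ hk, Pi.smul_apply, Pi.single_eq_of_ne (by simp), smul_zero]
    obtain ⟨j, hj⟩ : ∃ j, n - (k + 1) = j + 2 := ⟨n - (k + 3), by omega⟩
    simp only [betaVec, hj, show n - (k + 1 + 1) = j + 1 by omega, show n - (k + 2 + 1) = j by omega,
      beta]
    linear_combination (-b ^ (k + 1) * beta c d j) * hb
  | last =>
    rw [triQ_mulVec_apply_last hn, Pi.smul_apply, Pi.single_eq_of_ne (Fin.mk.inj_iff.not.mpr (by omega)), smul_zero]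
    simp only [betaVec, show n - (n - 1 + 1) = 0 by omega, show n - (n - 2 + 1) = 1 by omega, beta]
    rw [show n - 1 = n - 2 + 1 by omega, pow_succ]
    ring

lemma triQ_mulVec_one (hn : 2 ≤ n) :
    triQ n b c d *ᵥ 1 = (c - 2 * b) • 1 +
      (b - (c - d)) • (Pi.single ⟨0, by omega⟩ 1 + Pi.single ⟨0, by omega⟩ 1 ∘ Fin.rev) := by
  change triQ n b c d *ᵥ (fun j => (1 : ℕ → ℝ) j) = _
  refine funext (Fin.forall_of_zero_succ_last hn ?_ (fun k hk => ?_) ?_)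
  on_goal 1 => rw [triQ_mulVec_apply_zero hn]
  on_goal 2 => rw [triQ_mulVec_apply_succ hk]
  on_goal 3 => rw [triQ_mulVec_apply_last hn]
  all_goals
    simp only [Pi.add_apply, Pi.smul_apply, Function.comp_apply, Pi.one_apply, Pi.single_apply,
      Fin.ext_iff, Fin.val_rev, smul_eq_mul]
    split_ifs <;> first | contradiction | omega | ring

lemma d_mul_beta_sub_beta_ne_zero (hn : 2 ≤ n) (hb : b ^ 2 = 1)
    (hQ : IsUnit (triQ n b c d)) : d * beta c d (n - 1) - beta c d (n - 2) ≠ 0 := by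
  intro hD
  have hker := triQ_mulVec_betaVec (c := c) (d := d) hn hb
  rw [hD, zero_smul, ← mulVec_zero (triQ n b c d)] at hker
  have hlast : b ^ (n - 1) * beta c d (n - (n - 1 + 1)) = 0 :=
    congr_fun (mulVec_injective_iff_isUnit.mpr hQ hker) ⟨n - 1, by omega⟩
  rw [show n - (n - 1 + 1) = 0 by omega, beta, mul_one] at hlast
  exact pow_ne_zero _ (by rintro rfl; norm_num at hb) hlast

lemma triQ_mulVec_eq_one (hn : 2 ≤ n) (hb : b ^ 2 = 1)
    (hD : d * beta c d (n - 1) - beta c d (n - 2) ≠ 0) (hcb : c - 2 * b ≠ 0) :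
    triQ n b c d *ᵥ ((c - 2 * b)⁻¹ •
      (1 - ((b - (c - d)) / (d * beta c d (n - 1) - beta c d (n - 2))) •
        ((fun j : Fin n => betaVec n b c d j) + (fun j : Fin n => betaVec n b c d j) ∘ Fin.rev))) =
      1 := by
  simp only [mulVec_smul, mulVec_sub, mulVec_add, triQ_mulVec_comp_rev, triQ_mulVec_betaVec hn hb,
    triQ_mulVec_one hn]
  funext i
  simp only [Pi.smul_apply, Pi.add_apply, Pi.sub_apply, Function.comp_apply, Pi.one_apply, smul_eq_mul]
  field_simp
  ring

theorem rowSum_general_general (n : ℕ) (hn : 2 ≤ n) (b c d : ℝ) (hb : b = 1 ∨ b = -1)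
    (hc0 : 0 ≤ c) (hcase : c ≠ 2 ∨ (c = 2 ∧ b = -1))
    (hQ : IsUnit (triQ n b c d)) :
    let D : ℝ := d * beta c d (n - 1) - beta c d (n - 2)
    let v : ℕ → ℝ := fun i => b ^ (i - 1) * beta c d (n - i) / D
    ∀ i : Fin n, (∑ j, (triQ n b c d)⁻¹ i j) =
      (1 - (b - (c - d)) * (v ((i : ℕ) + 1) + v (n - ((i : ℕ) + 1) + 1))) /
        (c - 2 * b) := by
  intro D v i
  have hb2 : b ^ 2 = 1 := by rcases hb with rfl | rfl <;> norm_num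
  have hcb : c - 2 * b ≠ 0 := by
    rcases hb with rfl | rfl
    · rcases hcase with h | ⟨-, h⟩
      · exact sub_ne_zero.mpr (by simpa using h)
      · norm_num at h
    · linarith
  have hrow : ∑ j, (triQ n b c d)⁻¹ i j = ((triQ n b c d)⁻¹ *ᵥ 1) i := by
    simp [mulVec, dotProduct]
  rw [hrow, ← triQ_mulVec_eq_one hn hb2 (d_mul_beta_sub_beta_ne_zero hn hb2 hQ) hcb,
    mulVec_mulVec, nonsing_inv_mul _ ((isUnit_iff_isUnit_det _).mp hQ), one_mulVec]
  simp only [v, D, betaVec, Pi.smul_apply, Pi.sub_apply, Pi.one_apply, Pi.add_apply,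
    Function.comp_apply, Fin.val_rev, smul_eq_mul, Nat.add_sub_cancel]
  ring

/-- Theorem, row sums, c ≠ 2, or c = 2 and b = −1: the i-th row
sum of Q⁻¹ equals [1 − (b − λ)(vᵢ + v_{n−i+1})] / (c − 2b) (1-based indices). -/
theorem rowSum_general (n : ℕ) (hn : 2 ≤ n) (b c d : ℝ) (hb : b = 1 ∨ b = -1)
    (hc0 : 0 ≤ c) (hlam : c - d ≠ 0) (hcase : c ≠ 2 ∨ (c = 2 ∧ b = -1))
    (hQ : IsUnit (triQ n b c d)) :
    let D : ℝ := d * beta c d (n - 1) - beta c d (n - 2)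
    let v : ℕ → ℝ := fun i => b ^ (i - 1) * beta c d (n - i) / D
    ∀ i : Fin n, (∑ j, (triQ n b c d)⁻¹ i j) =
      (1 - (b - (c - d)) * (v ((i : ℕ) + 1) + v (n - ((i : ℕ) + 1) + 1))) /
        (c - 2 * b) :=
  rowSum_general_general n hn b c d hb hc0 hcase hQ
end

section
/- Let n ≥ 2, b ∈ {1, −1}, c ≥ 0 with c ≠ 2, and d be real with λ = c − d ≠ 0, and suppose the corresponding n×n tridiagonal matrix Q is invertible. Then the complex number coercion of trace(Q^{-1}) equals n (φ_+² r_+^{n−1} + φ_-² r_-^{n−1}) / (κ_0 κ) − 2ρ (r_+^n − r_-^n) / (κ_0² κ), where ρ = φ_+ φ_- = 1 − cλ + λ². -/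
/-!
Expanding along the first row, the determinants of tridiagonal blocks with diagonal
`c, …, c, d` obey the recurrence of `β`, because `b² = 1`. Deleting row and column `i` of `Q`
leaves a block-diagonal matrix, so the `i`-th diagonal cofactor is `β_i β_{n-1-i}`, and
`tr Q⁻¹ = (∑ β_i β_{n-1-i}) / det Q` with `det Q = d β_{n-1} - β_{n-2}`. As `r₊, r₋` are the roots
of `x² - c x + 1`, Binet's formula `κ₀ β_i = φ₊ r₊^i - φ₋ r₋^i` turns `κ₀ det Q` into `κ` and the
convolution `∑ β_i β_{n-1-i}` into a multiple of the geometric sum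
`∑ r₊^i r₋^{n-1-i} = (r₊ⁿ - r₋ⁿ) / κ₀`.
-/

open Matrix Finset

section Tridiagonal

variable {R : Type*} [CommRing R]

def tridiagEntry (b : R) (a : ℕ → R) (p q : ℕ) : R :=
  if p = q then a p else if p + 1 = q ∨ q + 1 = p then -b else 0

def tridiag (b : R) (a : ℕ → R) (k : ℕ) : Matrix (Fin k) (Fin k) R :=
  Matrix.of fun i j => tridiagEntry b a i j

theorem tridiag_apply (b : R) (a : ℕ → R) {k : ℕ} (i j : Fin k) :
    tridiag b a k i j = tridiagEntry b a i j := rfl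

theorem tridiagEntry_add_add (b : R) (a : ℕ → R) (p q s : ℕ) :
    tridiagEntry b a (p + s) (q + s) = tridiagEntry b (fun j => a (j + s)) p q := by
  simp only [tridiagEntry]
  split_ifs <;> first | rfl | omega

theorem tridiagEntry_eq_zero_of_add_one_lt (b : R) (a : ℕ → R) {p q : ℕ} (h : p + 1 < q) :
    tridiagEntry b a p q = 0 := by
  simp only [tridiagEntry]
  split_ifs <;> first | rfl | omega

theorem tridiagEntry_eq_zero_of_lt_add_one (b : R) (a : ℕ → R) {p q : ℕ} (h : q + 1 < p) :
    tridiagEntry b a p q = 0 := by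
  simp only [tridiagEntry]
  split_ifs <;> first | rfl | omega

theorem submatrix_tridiag {n k : ℕ} (b : R) (a : ℕ → R) (s : ℕ) {f g : Fin k → Fin n}
    (hf : ∀ x, (f x : ℕ) = x + s) (hg : ∀ y, (g y : ℕ) = y + s) :
    (tridiag b a n).submatrix f g = tridiag b (fun j => a (j + s)) k := by
  ext x y
  simp only [tridiag, submatrix_apply, of_apply, hf, hg, tridiagEntry_add_add]

theorem det_tridiag_succ_succ (b : R) (a : ℕ → R) (k : ℕ) :
    det (tridiag b a (k + 2)) = a 0 * det (tridiag b (fun j => a (j + 1)) (k + 1))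
      - b ^ 2 * det (tridiag b (fun j => a (j + 2)) k) := by
  have minor_one : det ((tridiag b a (k + 2)).submatrix Fin.succ (Fin.succAbove 1))
      = -b * det (tridiag b (fun j => a (j + 2)) k) := by
    rw [det_succ_column_zero, Fin.sum_univ_succ, Finset.sum_eq_zero fun i _ => by
      rw [submatrix_apply, tridiag_apply,
        tridiagEntry_eq_zero_of_lt_add_one b a (by simp),
        mul_zero, zero_mul]]
    rw [submatrix_submatrix, submatrix_tridiag b a 2 (f := Fin.succ ∘ Fin.succAbove 0)
      (g := Fin.succAbove 1 ∘ Fin.succ) (fun _ => by simp) (fun y => by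
        simp [Fin.succAbove, Fin.lt_def])]
    simp [tridiag_apply, tridiagEntry]
  rw [det_succ_row_zero, Fin.sum_univ_succ, Fin.sum_univ_succ,
    Finset.sum_eq_zero fun j _ => by
      rw [tridiag_apply, tridiagEntry_eq_zero_of_add_one_lt b a (by simp), mul_zero, zero_mul]]
  rw [Fin.succAbove_zero, submatrix_tridiag b a 1 (fun _ => rfl) (fun _ => rfl),
    Fin.succ_zero_eq_one, minor_one,
    show tridiag b a (k + 2) 0 0 = a 0 by simp [tridiag_apply, tridiagEntry],
    show tridiag b a (k + 2) 0 1 = -b by simp [tridiag_apply, tridiagEntry],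
    Fin.val_zero, Fin.val_one]
  ring

theorem det_tridiag_reverse (b : R) (a : ℕ → R) (k : ℕ) :
    det (tridiag b (fun j => a (k - 1 - j)) k) = det (tridiag b a k) := by
  rw [← det_submatrix_equiv_self Fin.revPerm]
  congr 1
  ext i j
  simp only [tridiag_apply, submatrix_apply, Fin.revPerm_apply, Fin.val_rev, tridiagEntry]
  have := i.isLt; have := j.isLt
  split_ifs <;> first | rfl | (congr 1; omega)

theorem det_submatrix_succAbove_tridiag (b : R) (a : ℕ → R) {m : ℕ} (i : Fin (m + 1)) :
    det ((tridiag b a (m + 1)).submatrix i.succAbove i.succAbove)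
      = det (tridiag b a i) * det (tridiag b (fun j => a (j + (i + 1))) (m - i)) := by
  let e : Fin i ⊕ Fin (m - i) ≃ Fin m := finSumFinEquiv.trans (finCongr (by omega))
  have val_left (x : Fin i) : (i.succAbove (e (.inl x)) : ℕ) = x + 0 := by
    simp [e, Fin.succAbove, Fin.lt_def]
  have val_right (y : Fin (m - i)) : (i.succAbove (e (.inr y)) : ℕ) = y + (i + 1) := by
    simp [e, Fin.succAbove, Fin.lt_def]; omega
  rw [← det_submatrix_equiv_self e]
  set M := ((tridiag b a (m + 1)).submatrix i.succAbove i.succAbove).submatrix e e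
  have lower_zero : M.toBlocks₂₁ = 0 := by
    ext y x
    simp only [M, toBlocks₂₁, of_apply, submatrix_apply, tridiag_apply, val_left, val_right]
    exact tridiagEntry_eq_zero_of_lt_add_one b a (by omega)
  rw [← fromBlocks_toBlocks M, lower_zero, det_fromBlocks_zero₂₁]
  congr 1
  · exact congrArg det (submatrix_tridiag b a 0 val_left val_left)
  · exact congrArg det (submatrix_tridiag b a (i + 1) val_right val_right)

theorem trace_inv_eq_sum_det_submatrix_div_det {K : Type*} [Field K] {m : ℕ}
    (A : Matrix (Fin (m + 1)) (Fin (m + 1)) K) :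
    trace A⁻¹ = (∑ i : Fin (m + 1), det (A.submatrix i.succAbove i.succAbove)) / det A := by
  simp [Matrix.inv_def, trace, adjugate_fin_succ_eq_det_submatrix, div_eq_inv_mul, Finset.mul_sum]

end Tridiagonal

theorem det_tridiag_eq_beta {b : ℝ} (hb : b ^ 2 = 1) (c d : ℝ) :
    ∀ (k : ℕ) {a : ℕ → ℝ}, (∀ j < k, a j = if j + 1 = k then d else c) →
      det (tridiag b a k) = beta c d k
  | 0, _, _ => det_fin_zero
  | 1, a, ha => by simp [tridiag_apply, tridiagEntry, ha 0, beta]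
  | k + 2, a, ha => by
    rw [det_tridiag_succ_succ, hb, one_mul, ha 0 (by omega), if_neg (by omega),
      det_tridiag_eq_beta hb c d (k + 1) fun j hj =>
        (ha _ (by omega)).trans (if_congr (by omega) rfl rfl),
      det_tridiag_eq_beta hb c d k fun j hj =>
        (ha _ (by omega)).trans (if_congr (by omega) rfl rfl), beta]

theorem det_tridiag_eq_beta_of_head {b : ℝ} (hb : b ^ 2 = 1) (c d : ℝ) (k : ℕ) {a : ℕ → ℝ}
    (ha : ∀ j < k, a j = if j = 0 then d else c) : det (tridiag b a k) = beta c d k := by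
  rw [← det_tridiag_reverse]
  exact det_tridiag_eq_beta hb c d k fun j hj =>
    (ha _ (by omega)).trans (if_congr (by omega) rfl rfl)

theorem triQ_eq_tridiag (m : ℕ) (b c d : ℝ) :
    triQ (m + 1) b c d = tridiag b (fun j => if j = 0 ∨ j = m then d else c) (m + 1) := by
  ext i j
  simp only [triQ, tridiag_apply, tridiagEntry, of_apply, Fin.ext_iff, Nat.add_sub_cancel]

theorem det_triQ {b : ℝ} (hb : b ^ 2 = 1) (c d : ℝ) (m : ℕ) :
    det (triQ (m + 2) b c d) = d * beta c d (m + 1) - beta c d m := by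
  rw [triQ_eq_tridiag, det_tridiag_succ_succ, hb, one_mul, if_pos (Or.inl rfl),
    det_tridiag_eq_beta hb c d (m + 1) fun j hj => by simp,
    det_tridiag_eq_beta hb c d m fun j hj => by simp]

theorem trace_inv_triQ {b : ℝ} (hb : b ^ 2 = 1) (c d : ℝ) (n : ℕ) :
    trace (triQ n b c d)⁻¹
      = (∑ i ∈ range n, beta c d i * beta c d (n - 1 - i)) / det (triQ n b c d) := by
  cases n with
  | zero => simp
  | succ m =>
    rw [trace_inv_eq_sum_det_submatrix_div_det, Nat.add_sub_cancel,
      ← Fin.sum_univ_eq_sum_range (fun i => beta c d i * beta c d (m - i))]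
    congr 1
    refine Finset.sum_congr rfl fun i _ => ?_
    have := i.isLt
    rw [triQ_eq_tridiag, det_submatrix_succAbove_tridiag,
      det_tridiag_eq_beta_of_head hb c d i fun j hj => if_congr (by omega) rfl rfl,
      det_tridiag_eq_beta hb c d (m - i) fun j hj => if_congr (by omega) rfl rfl]

theorem beta_binet {c : ℝ} (d : ℝ) {rp rm : ℂ} (hrp : rp ^ 2 = c * rp - 1)
    (hrm : rm ^ 2 = c * rm - 1) :
    ∀ i, (beta c d i : ℂ) * (rp - rm) = (rp - (c - d)) * rp ^ i - (rm - (c - d)) * rm ^ i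
  | 0 => by simp only [beta]; push_cast; ring
  | 1 => by simp only [beta]; linear_combination hrm - hrp
  | i + 2 => by
    have h1 := beta_binet d hrp hrm (i + 1)
    have h0 := beta_binet d hrp hrm i
    simp only [beta]
    push_cast
    linear_combination (c : ℂ) * h1 - h0 - (rp - (c - d)) * rp ^ i * hrp
      + (rm - (c - d)) * rm ^ i * hrm

theorem sum_mul_reflect_mul_sq_of_binet {K : Type*} [CommRing K] {B : ℕ → K} {rp rm vp vm k : K}
    (hB : ∀ i, B i * k = vp * rp ^ i - vm * rm ^ i) (n : ℕ) :
    (∑ i ∈ range n, B i * B (n - 1 - i)) * k ^ 2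
      = n * (vp ^ 2 * rp ^ (n - 1) + vm ^ 2 * rm ^ (n - 1))
        - 2 * (vp * vm) * ∑ i ∈ range n, rp ^ i * rm ^ (n - 1 - i) := by
  have term : ∀ i ∈ range n, B i * B (n - 1 - i) * k ^ 2
      = (vp ^ 2 * rp ^ (n - 1) + vm ^ 2 * rm ^ (n - 1))
        - vp * vm * (rp ^ i * rm ^ (n - 1 - i) + rm ^ i * rp ^ (n - 1 - i)) := by
    intro i hi
    have hi : i ≤ n - 1 := by have := mem_range.mp hi; omega
    rw [← pow_mul_pow_sub rp hi, ← pow_mul_pow_sub rm hi]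
    linear_combination (B (n - 1 - i) * k) * hB i + (vp * rp ^ i - vm * rm ^ i) * hB (n - 1 - i)
  rw [sum_mul, sum_congr rfl term, sum_sub_distrib, sum_const, card_range, ← mul_sum,
    sum_add_distrib, geom_sum₂_comm rm rp, nsmul_eq_mul]
  ring

theorem trace_inv_triQ_of_roots (n : ℕ) (hn : 2 ≤ n) {b c d : ℝ} (hb : b ^ 2 = 1) {rp rm : ℂ}
    (hrp : rp ^ 2 = c * rp - 1) (hrm : rm ^ 2 = c * rm - 1) (hk0 : rp - rm ≠ 0) :
    let lam : ℂ := c - d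
    let vp := rp - lam
    let vm := rm - lam
    let kap := vp ^ 2 * rp ^ (n - 1) - vm ^ 2 * rm ^ (n - 1)
    ((trace (triQ n b c d)⁻¹ : ℝ) : ℂ) =
      n * (vp ^ 2 * rp ^ (n - 1) + vm ^ 2 * rm ^ (n - 1)) / ((rp - rm) * kap)
        - 2 * (vp * vm) * (rp ^ n - rm ^ n) / ((rp - rm) ^ 2 * kap) := by
  obtain ⟨m, rfl⟩ : ∃ m, n = m + 2 := ⟨n - 2, by omega⟩
  intro lam vp vm kap
  have hB := beta_binet d hrp hrm
  have hdet : ((det (triQ (m + 2) b c d) : ℝ) : ℂ) * (rp - rm) = kap := by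
    simp only [det_triQ hb, kap, vp, vm, lam]
    push_cast
    linear_combination d * hB (m + 1) - hB m - (rp - (c - d)) * rp ^ m * hrp
      + (rm - (c - d)) * rm ^ m * hrm
  have hconv := sum_mul_reflect_mul_sq_of_binet hB (m + 2)
  rw [trace_inv_triQ hb, ← hdet, ← geom_sum₂_mul rp rm (m + 2)]
  push_cast at hconv ⊢
  rcases eq_or_ne (det (triQ (m + 2) b c d)) 0 with h | h
  · -- `Q⁻¹ = 0` for singular `Q`, and then `κ = 0` also makes the right side vanish
    simp [h]
  · field_simp
    rw [hconv]
    ring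

theorem trace_inv_c_ne_two_general (n : ℕ) (hn : 2 ≤ n) (b c d : ℝ) (hb : b = 1 ∨ b = -1)
    (hc0 : 0 ≤ c) (hc : c ≠ 2) :
    let lam : ℂ := (c : ℂ) - (d : ℂ)
    let rp : ℂ := ((c : ℂ) + ((c : ℂ) ^ 2 - 4) ^ ((1 : ℂ) / 2)) / 2
    let rm : ℂ := ((c : ℂ) - ((c : ℂ) ^ 2 - 4) ^ ((1 : ℂ) / 2)) / 2
    let vp : ℂ := rp - lam
    let vm : ℂ := rm - lam
    let k0 : ℂ := rp - rm
    let kap : ℂ := vp ^ 2 * rp ^ (n - 1) - vm ^ 2 * rm ^ (n - 1)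
    let rho : ℂ := vp * vm
    ((Matrix.trace (triQ n b c d)⁻¹ : ℝ) : ℂ) =
      (n : ℂ) * (vp ^ 2 * rp ^ (n - 1) + vm ^ 2 * rm ^ (n - 1)) / (k0 * kap)
        - 2 * rho * (rp ^ n - rm ^ n) / (k0 ^ 2 * kap) := by
  intro lam rp rm vp vm k0 kap rho
  have hk0_sq : k0 ^ 2 = (c : ℂ) ^ 2 - 4 := by
    rw [show k0 = ((c : ℂ) ^ 2 - 4) ^ ((2 : ℂ)⁻¹) by simp only [k0, rp, rm]; ring_nf,
      Complex.cpow_ofNat_inv_pow]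
  have hk0 : k0 ≠ 0 := by
    intro h
    have hc_sq : (c : ℂ) ^ 2 = 2 ^ 2 := by linear_combination k0 * h - hk0_sq
    exact hc ((sq_eq_sq₀ hc0 zero_le_two).mp (by exact_mod_cast hc_sq))
  have hb2 : b ^ 2 = 1 := by rcases hb with rfl | rfl <;> norm_num
  exact trace_inv_triQ_of_roots n hn hb2 (by linear_combination hk0_sq / 4)
    (by linear_combination hk0_sq / 4) hk0

/-- Theorem, trace, c ≠ 2: for invertible Q,
tr(Q⁻¹) = n(φ₊² r₊^{n−1} + φ₋² r₋^{n−1})/(κ₀ κ) − 2ρ(r₊ⁿ − r₋ⁿ)/(κ₀² κ)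
as complex numbers, where ρ = φ₊ φ₋. -/
theorem trace_inv_c_ne_two (n : ℕ) (hn : 2 ≤ n) (b c d : ℝ) (hb : b = 1 ∨ b = -1)
    (hc0 : 0 ≤ c) (hc : c ≠ 2) (hlam : c - d ≠ 0)
    (hQ : IsUnit (triQ n b c d)) :
    let lam : ℂ := (c : ℂ) - (d : ℂ)
    let rp : ℂ := ((c : ℂ) + ((c : ℂ) ^ 2 - 4) ^ ((1 : ℂ) / 2)) / 2
    let rm : ℂ := ((c : ℂ) - ((c : ℂ) ^ 2 - 4) ^ ((1 : ℂ) / 2)) / 2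
    let vp : ℂ := rp - lam
    let vm : ℂ := rm - lam
    let k0 : ℂ := rp - rm
    let kap : ℂ := vp ^ 2 * rp ^ (n - 1) - vm ^ 2 * rm ^ (n - 1)
    let rho : ℂ := vp * vm
    ((Matrix.trace (triQ n b c d)⁻¹ : ℝ) : ℂ) =
      (n : ℂ) * (vp ^ 2 * rp ^ (n - 1) + vm ^ 2 * rm ^ (n - 1)) / (k0 * kap)
        - 2 * rho * (rp ^ n - rm ^ n) / (k0 ^ 2 * kap) :=
  trace_inv_c_ne_two_general n hn b c d hb hc0 hc
end
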